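/- Let p ∈ (1,∞), let q ≥ 3 be a natural number, set y_{q,2q} = Σ_{n=q}^{2q} (1/n) x_n where x_n = 2^{-(n-1)} Σ_{j=2^{n-1}}^{2^n − 1} b_j, and let D : c₀₀ → c₀₀ be the map acting on each block M_n = [2^{n-1}, 2^n) ∩ ℕ as summation onto the first coordinate, i.e., (D x)_{2^{n-1}} = Σ_{j∈M_n} x_j and (D x)_j = 0 for j ∈ M_n, j ≠ 2^{n-1}. Then the set N = { 2^{n-1} : q ≤ n ≤ 2q } is admissible, and ‖D y_{q,2q}‖_{B_p} = Σ_{n=q}^{2q} 1/n > 1/2. -/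

import Mathlib

/-!
The vector `D y` is supported on the admissible set `N = {2^(n-1) : q ≤ n ≤ 2q}`, where it takes
the values `1/n`. For `p ≥ 1` the `ℓ^p`-norm of the numbers `μ(D y, N_j)` is at most their sum,
and since the `N_j` are disjoint that sum is at most `μ(D y, N)`; the single admissible set `N`
attains this bound. Finally each of the `q + 1` terms `1/n` is at least `1/(2q)`.
-/

/-- A non-empty finite subset `M` of `ℕ = {1,2,...}` is admissible if `|M| ≤ min M`,
i.e. `M` is non-empty and its cardinality is at most every element of `M`. -/
def Admissible (M : Finset ℕ) : Prop := M.Nonempty ∧ ∀ k ∈ M, M.card ≤ k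

/-- `μ(x, N) = ∑_{n ∈ N} |x_n|`. -/
def mu (x : ℕ → ℝ) (N : Finset ℕ) : ℝ := ∑ n ∈ N, |x n|

/-- `N₁ < N₂ < ⋯ < N_k`: every element of `N i` is smaller than every element of `N j`
whenever `i < j`. -/
def SepChain {k : ℕ} (N : Fin k → Finset ℕ) : Prop :=
  ∀ i j : Fin k, i < j → ∀ a ∈ N i, ∀ b ∈ N j, a < b

/-- The Baernstein norm
`‖x‖_{B_p} = sup { ν_p(x; N₁,…,N_k) : k ≥ 1, N₁ < ⋯ < N_k admissible }`, where
`ν_p(x; N₁,…,N_k) = (∑_j μ(x,N_j)^p)^{1/p}`. -/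
noncomputable def BpNorm (p : ℝ) (x : ℕ → ℝ) : ℝ :=
  sSup { t : ℝ | ∃ (k : ℕ) (N : Fin k → Finset ℕ), 0 < k ∧ (∀ j, Admissible (N j)) ∧
    SepChain N ∧ t = (∑ j, (mu x (N j)) ^ p) ^ (1 / p) }

/-- The block `M_n = [2^{n-1}, 2^n) ∩ ℕ`. -/
def Mblock (n : ℕ) : Finset ℕ := Finset.Ico (2 ^ (n - 1)) (2 ^ n)

/-- `uep(N) = { 2^k − 1 : k ≥ 1, N ∩ M_k ≠ ∅ }`, the set of upper end points of the
blocks `M_k` that `N` intersects. -/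
def uep (N : Finset ℕ) : Finset ℕ :=
  ((Finset.range (N.sup id + 2)).filter fun k => 1 ≤ k ∧ (N ∩ Mblock k).Nonempty).image
    fun k => 2 ^ k - 1

/-- The diagonal operator `Δ(y) = ∑_{n=1}^K y_{2^n−1} · x_n`. -/
def DeltaOp (K : ℕ) (x : ℕ → ℕ → ℝ) (y : ℕ → ℝ) : ℕ → ℝ :=
  fun j => ∑ n ∈ Finset.Icc 1 K, y (2 ^ n - 1) * x n j

open Finset

lemma Real.sum_rpow_le_rpow_sum {ι : Type*} (s : Finset ι) {f : ι → ℝ} (hf : ∀ i ∈ s, 0 ≤ f i)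
    {p : ℝ} (hp : 1 ≤ p) : ∑ i ∈ s, f i ^ p ≤ (∑ i ∈ s, f i) ^ p := by
  induction s using Finset.cons_induction with
  | empty => simp [Real.zero_rpow (by positivity : p ≠ 0)]
  | cons i s _ ih =>
    rw [sum_cons, sum_cons]
    have hs : ∀ j ∈ s, 0 ≤ f j := fun j hj => hf j (mem_cons_of_mem hj)
    calc f i ^ p + ∑ j ∈ s, f j ^ p ≤ f i ^ p + (∑ j ∈ s, f j) ^ p := by gcongr; exact ih hs
      _ ≤ (f i + ∑ j ∈ s, f j) ^ p :=
        Real.add_rpow_le_rpow_add (hf i (mem_cons_self i s)) (sum_nonneg hs) hp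

lemma Real.rpow_sum_rpow_le_sum {ι : Type*} (s : Finset ι) {f : ι → ℝ} (hf : ∀ i ∈ s, 0 ≤ f i)
    {p : ℝ} (hp : 1 ≤ p) : (∑ i ∈ s, f i ^ p) ^ (1 / p) ≤ ∑ i ∈ s, f i := by
  rw [one_div, Real.rpow_inv_le_iff_of_pos (sum_nonneg fun i hi => Real.rpow_nonneg (hf i hi) p)
    (sum_nonneg hf) (by positivity)]
  exact Real.sum_rpow_le_rpow_sum s hf hp

lemma Admissible.pos {M : Finset ℕ} (hM : Admissible M) {k : ℕ} (hk : k ∈ M) : 0 < k :=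
  (card_pos.2 hM.1).trans_le (hM.2 k hk)

lemma SepChain.pairwiseDisjoint {k : ℕ} {N : Fin k → Finset ℕ} (hN : SepChain N) :
    ((univ : Finset (Fin k)) : Set (Fin k)).PairwiseDisjoint N := by
  intro i _ j _ hij
  refine disjoint_left.2 fun a hai haj => ?_
  rcases hij.lt_or_gt with h | h
  · exact (hN i j h a hai a haj).false
  · exact (hN j i h a haj a hai).false

lemma mu_nonneg (x : ℕ → ℝ) (N : Finset ℕ) : 0 ≤ mu x N :=
  sum_nonneg fun _ _ => abs_nonneg _

lemma SepChain.sum_mu_eq {k : ℕ} {N : Fin k → Finset ℕ} (hN : SepChain N) (x : ℕ → ℝ) :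
    ∑ j, mu x (N j) = mu x (univ.biUnion N) :=
  (sum_biUnion hN.pairwiseDisjoint).symm

lemma mu_le_mu_of_support {x : ℕ → ℝ} {N U : Finset ℕ} (hU : ∀ j ∈ U, 0 < j)
    (hx : ∀ j, 0 < j → j ∉ N → x j = 0) : mu x U ≤ mu x N := by
  have hUN : mu x U = mu x (U ∩ N) :=
    (sum_subset inter_subset_left fun j hjU hj =>
      by rw [hx j (hU j hjU) fun hjN => hj (mem_inter.2 ⟨hjU, hjN⟩), abs_zero]).symm
  rw [hUN]
  exact sum_le_sum_of_subset_of_nonneg inter_subset_right fun _ _ _ => abs_nonneg _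

theorem BpNorm_eq_mu_of_support {p : ℝ} (hp : 1 ≤ p) {x : ℕ → ℝ} {N : Finset ℕ}
    (hN : Admissible N) (hx : ∀ j, 0 < j → j ∉ N → x j = 0) : BpNorm p x = mu x N := by
  refine IsGreatest.csSup_eq ⟨⟨1, fun _ => N, one_pos, fun _ => hN, ?_, ?_⟩, ?_⟩
  · exact fun i j hij => absurd hij (Subsingleton.elim i j).not_lt
  · rw [Fin.sum_univ_one, one_div, Real.rpow_rpow_inv (mu_nonneg x N) (by positivity)]
  · rintro t ⟨k, M, -, hM, hsep, rfl⟩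
    calc (∑ j, mu x (M j) ^ p) ^ (1 / p) ≤ ∑ j, mu x (M j) :=
          Real.rpow_sum_rpow_le_sum _ (fun j _ => mu_nonneg x (M j)) hp
      _ = mu x (univ.biUnion M) := hsep.sum_mu_eq x
      _ ≤ mu x N := mu_le_mu_of_support (fun j hj => by
          obtain ⟨i, -, hji⟩ := mem_biUnion.1 hj
          exact (hM i).pos hji) hx

lemma log_eq_of_mem_Mblock {n j : ℕ} (hn : 1 ≤ n) (hj : j ∈ Mblock n) : Nat.log 2 j = n - 1 := by
  rw [Mblock, mem_Ico] at hj
  exact Nat.log_eq_of_pow_le_of_lt_pow hj.1 (by rw [Nat.sub_add_cancel hn]; exact hj.2)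

lemma eq_of_mem_Mblock {m n j : ℕ} (hm : 1 ≤ m) (hn : 1 ≤ n) (hjm : j ∈ Mblock m)
    (hjn : j ∈ Mblock n) : m = n := by
  have := log_eq_of_mem_Mblock hm hjm
  have := log_eq_of_mem_Mblock hn hjn
  omega

lemma mem_Mblock_log_add_one {j : ℕ} (hj : j ≠ 0) : j ∈ Mblock (Nat.log 2 j + 1) :=
  mem_Ico.2 ⟨Nat.pow_log_le_self 2 hj, Nat.lt_pow_succ_log_self one_lt_two j⟩

lemma card_Mblock {n : ℕ} (hn : 1 ≤ n) : #(Mblock n) = 2 ^ (n - 1) := by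
  have : 2 ^ n = 2 * 2 ^ (n - 1) := by rw [← pow_succ', Nat.sub_add_cancel hn]
  rw [Mblock, Nat.card_Ico]
  omega

/-- The vector `∑_{n ∈ s} c n • x_n`, where `x_n` is the normalised indicator of the block `M_n`. -/
noncomputable def blockStep (s : Finset ℕ) (c : ℕ → ℝ) : ℕ → ℝ := fun j =>
  ∑ n ∈ s, c n * (if j ∈ Mblock n then (1 / 2 ^ (n - 1) : ℝ) else 0)

lemma sum_Mblock_blockStep {s : Finset ℕ} (hs : ∀ n ∈ s, 1 ≤ n) (c : ℕ → ℝ) {m : ℕ}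
    (hm : 1 ≤ m) : ∑ j ∈ Mblock m, blockStep s c j = if m ∈ s then c m else 0 := by
  have hblock : ∀ n ∈ s, ∑ j ∈ Mblock m, c n * (if j ∈ Mblock n then (1 / 2 ^ (n - 1) : ℝ) else 0)
      = if n = m then c n else 0 := by
    intro n hn
    split_ifs with hnm
    · subst hnm
      rw [sum_congr rfl fun j hj => by rw [if_pos hj], sum_const, card_Mblock hm, nsmul_eq_mul]
      push_cast
      field_simp
    · exact sum_eq_zero fun j hj => by
        rw [if_neg fun hjn => hnm (eq_of_mem_Mblock (hs n hn) hm hjn hj), mul_zero]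
  simp only [blockStep]
  rw [sum_comm, sum_congr rfl hblock, sum_ite_eq']

lemma eq_zero_of_blockSum {x z : ℕ → ℝ}
    (hz : ∀ n, 1 ≤ n → z (2 ^ (n - 1)) = ∑ j ∈ Mblock n, x j ∧
      ∀ j ∈ Mblock n, j ≠ 2 ^ (n - 1) → z j = 0)
    {s : Finset ℕ} (hx : ∀ m, 1 ≤ m → m ∉ s → ∑ j ∈ Mblock m, x j = 0)
    {j : ℕ} (hj : 0 < j) (hjs : j ∉ s.image fun n => 2 ^ (n - 1)) : z j = 0 := by
  set m := Nat.log 2 j + 1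
  have hm : 1 ≤ m := Nat.le_add_left 1 _
  by_cases hjm : j = 2 ^ (m - 1)
  · rw [hjm, (hz m hm).1]
    exact hx m hm fun hms => hjs (mem_image.2 ⟨m, hms, hjm.symm⟩)
  · exact (hz m hm).2 j (mem_Mblock_log_add_one hj.ne') hjm

theorem BpNorm_blockSum_blockStep {p : ℝ} (hp : 1 ≤ p) {s : Finset ℕ} (hs : ∀ n ∈ s, 1 ≤ n)
    (hadm : Admissible (s.image fun n => 2 ^ (n - 1))) (c : ℕ → ℝ) {z : ℕ → ℝ}
    (hz : ∀ n, 1 ≤ n → z (2 ^ (n - 1)) = ∑ j ∈ Mblock n, blockStep s c j ∧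
      ∀ j ∈ Mblock n, j ≠ 2 ^ (n - 1) → z j = 0) :
    BpNorm p z = ∑ n ∈ s, |c n| := by
  have hinj : Set.InjOn (fun n => 2 ^ (n - 1)) (s : Set ℕ) := fun m hm n hn hmn => by
    have := Nat.pow_right_injective le_rfl hmn
    have := hs m hm
    have := hs n hn
    omega
  rw [BpNorm_eq_mu_of_support hp hadm fun j hj hjs => eq_zero_of_blockSum hz
    (fun m hm hms => by rw [sum_Mblock_blockStep hs c hm, if_neg hms]) hj hjs,
    mu, sum_image hinj]
  refine sum_congr rfl fun n hn => ?_
  rw [(hz n (hs n hn)).1, sum_Mblock_blockStep hs c (hs n hn), if_pos hn]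

lemma succ_le_two_pow_pred {q : ℕ} (hq : 3 ≤ q) : q + 1 ≤ 2 ^ (q - 1) := by
  obtain ⟨m, rfl⟩ : ∃ m, q = m + 3 := ⟨q - 3, by omega⟩
  have : 2 ^ (m + 3 - 1) = 4 * 2 ^ m := by rw [show m + 3 - 1 = m + 2 by omega, pow_add]; ring
  have := Nat.lt_two_pow_self (n := m)
  omega

lemma admissible_image_pow_Icc {q : ℕ} (hq : 3 ≤ q) :
    Admissible ((Icc q (2 * q)).image fun n => 2 ^ (n - 1)) := by
  refine ⟨(nonempty_Icc.2 (by omega)).image _, fun k hk => ?_⟩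
  obtain ⟨n, hn, rfl⟩ := mem_image.1 hk
  calc #((Icc q (2 * q)).image fun n => 2 ^ (n - 1)) ≤ #(Icc q (2 * q)) := card_image_le
    _ = q + 1 := by rw [Nat.card_Icc]; omega
    _ ≤ 2 ^ (q - 1) := succ_le_two_pow_pred hq
    _ ≤ 2 ^ (n - 1) := Nat.pow_le_pow_right two_pos (by have := (mem_Icc.1 hn).1; omega)

lemma one_half_lt_sum_Icc_inv {q : ℕ} (hq : 1 ≤ q) :
    (1 / 2 : ℝ) < ∑ n ∈ Icc q (2 * q), 1 / (n : ℝ) := by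
  have hq' : (0 : ℝ) < q := by exact_mod_cast hq
  calc (1 / 2 : ℝ) < (q + 1) * (1 / (2 * q)) := by
        rw [mul_one_div, lt_div_iff₀ (by positivity)]; linarith
    _ = ∑ _n ∈ Icc q (2 * q), 1 / (2 * (q : ℝ)) := by
        rw [sum_const, Nat.card_Icc, nsmul_eq_mul, show 2 * q + 1 - q = q + 1 by omega]
        push_cast; ring
    _ ≤ ∑ n ∈ Icc q (2 * q), 1 / (n : ℝ) := sum_le_sum fun n hn => by
        obtain ⟨h1, h2⟩ := mem_Icc.1 hn
        exact one_div_le_one_div_of_le (by exact_mod_cast hq.trans h1) (by exact_mod_cast h2)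

/-- Let `p ∈ (1,∞)`, let `q ≥ 3`, set `y_{q,2q} = ∑_{n=q}^{2q} (1/n) x_n`, where
`x_n = 2^{-(n-1)} ∑_{j∈M_n} b_j`, and let `D` be the map acting on each block
`M_n = [2^{n-1}, 2^n) ∩ ℕ` as summation onto the first coordinate.  Then the set
`N = { 2^{n-1} : q ≤ n ≤ 2q }` is admissible and
`‖D y_{q,2q}‖_{B_p} = ∑_{n=q}^{2q} 1/n > 1/2`. -/
theorem stmt_17 (p : ℝ) (hp : 1 < p) (q : ℕ) (hq : 3 ≤ q)
    (D : (ℕ → ℝ) → (ℕ → ℝ))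
    (hD : ∀ (x : ℕ → ℝ) (n : ℕ), 1 ≤ n →
      D x (2 ^ (n - 1)) = (∑ j ∈ Mblock n, x j) ∧
      ∀ j ∈ Mblock n, j ≠ 2 ^ (n - 1) → D x j = 0)
    (y : ℕ → ℝ)
    (hy : y = fun j => ∑ n ∈ Finset.Icc q (2 * q),
      (1 / (n : ℝ)) * (if j ∈ Mblock n then (1 / 2 ^ (n - 1) : ℝ) else 0)) :
    Admissible ((Finset.Icc q (2 * q)).image fun n => 2 ^ (n - 1)) ∧
    BpNorm p (D y) = (∑ n ∈ Finset.Icc q (2 * q), 1 / (n : ℝ)) ∧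
    (1 / 2 : ℝ) < ∑ n ∈ Finset.Icc q (2 * q), 1 / (n : ℝ) := by
  have hs : ∀ n ∈ Icc q (2 * q), 1 ≤ n := fun n hn => by have := (mem_Icc.1 hn).1; omega
  have hadm := admissible_image_pow_Icc hq
  have hy' : y = blockStep (Icc q (2 * q)) fun n => 1 / (n : ℝ) := hy
  refine ⟨hadm, ?_, one_half_lt_sum_Icc_inv (by omega)⟩
  rw [hy', BpNorm_blockSum_blockStep hp.le hs hadm _ (hD _)]
  exact sum_congr rfl fun n _ => abs_of_nonneg (by positivity)
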